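/- For integers k ≥ 1, l ≥ 2 and d ≥ 1, the algebraic connectivity satisfies α(T(k,l,d)) > α(T(k,l−1,d+1)). -/

import Mathlib

/-!
Let `x` be a unit Fiedler vector of `H = T(k,l,d)`, so `L_H x = μ x` with `μ = α(H)`.
If `μ = 1`, an explicit test vector shows `α(T(k,l-1,d+1)) < 1`. Otherwise the eigen-equation
at a right pendant `p` reads `(1 - μ) x_p = x_{v_d}`, so all right pendants carry the same value
`c`. Moreover `x_{v_d} ≠ c`: else `x - c` would be a `μ`-eigenvector vanishing at `v_d`, and such
an eigenvector vanishes identically (propagate the eigen-equation along the path), forcing `x = 0`.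
Now turn one right pendant into a new path end `v_{d+1}`, keeping every value of `x`: the result
is a unit vector orthogonal to `𝟙` on `T(k,l-1,d+1)`, and of the `l` edges `v_d p` with gap
`x_{v_d} - c` only one survives, so its Laplacian form is `μ - (l-1)(x_{v_d} - c)^2 < μ`.
-/

/-- The algebraic connectivity of a graph: the second smallest Laplacian eigenvalue,
realized as the minimum of the Rayleigh quotient over unit vectors orthogonal to the
all-ones vector. -/
noncomputable def algConn {V : Type*} [Fintype V] [DecidableEq V] (G : SimpleGraph V) : ℝ :=
  letI := Classical.decRel G.Adj
  sInf { r : ℝ | ∃ x : V → ℝ, (∑ v, x v) = 0 ∧ (∑ v, (x v) ^ 2) = 1 ∧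
      r = dotProduct x ((G.lapMatrix ℝ).mulVec x) }

/-- A Fiedler vector: an eigenvector of the Laplacian matrix for the eigenvalue `algConn G`. -/
noncomputable def IsFiedlerVector {V : Type*} [Fintype V] [DecidableEq V]
    (G : SimpleGraph V) (x : V → ℝ) : Prop :=
  letI := Classical.decRel G.Adj
  x ≠ 0 ∧ (G.lapMatrix ℝ).mulVec x = algConn G • x

/-- The domination number: the minimum size of a set `S` of vertices such that every
vertex outside `S` has a neighbor in `S`. -/
noncomputable def dominationNumber {V : Type*} [Fintype V] (G : SimpleGraph V) : ℕ :=
  sInf { k : ℕ | ∃ S : Finset V, S.card = k ∧ ∀ v ∉ S, ∃ u ∈ S, G.Adj u v }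

/-- The tree `T(k,l,d)`: a path on `d` vertices `0, …, d-1` with `k` pendant vertices
attached at vertex `0` and `l` pendant vertices attached at vertex `d-1`. -/
def Tkld (k l d : ℕ) : SimpleGraph (Fin k ⊕ Fin d ⊕ Fin l) where
  Adj a b :=
    match a, b with
    | Sum.inl _, Sum.inr (Sum.inl j) => j.1 = 0
    | Sum.inr (Sum.inl j), Sum.inl _ => j.1 = 0
    | Sum.inr (Sum.inl i), Sum.inr (Sum.inl j) => i.1 + 1 = j.1 ∨ j.1 + 1 = i.1
    | Sum.inr (Sum.inl j), Sum.inr (Sum.inr _) => j.1 + 1 = d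
    | Sum.inr (Sum.inr _), Sum.inr (Sum.inl j) => j.1 + 1 = d
    | _, _ => False
  symm := by
    constructor
    rintro (a | b | c) (a' | b' | c') h <;> simp_all <;> tauto
  loopless := by
    constructor
    rintro (a | b | c) h <;> simp_all

/-- The coalescence `G₁(v) ◇ G₂(u)`: identify the vertex `v` of `G₁` with the vertex `u`
of `G₂` (the identified vertex is represented by `Sum.inl v`). -/
def coalesce {V₁ V₂ : Type*} (G₁ : SimpleGraph V₁) (G₂ : SimpleGraph V₂)
    (v : V₁) (u : V₂) : SimpleGraph (V₁ ⊕ {w : V₂ // w ≠ u}) where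
  Adj a b :=
    match a, b with
    | Sum.inl a, Sum.inl b => G₁.Adj a b
    | Sum.inl a, Sum.inr b => a = v ∧ G₂.Adj u b.1
    | Sum.inr a, Sum.inl b => b = v ∧ G₂.Adj u a.1
    | Sum.inr a, Sum.inr b => G₂.Adj a.1 b.1
  symm := by
    constructor
    rintro (a | a) (b | b) h <;> simp_all [SimpleGraph.adj_comm]
  loopless := by
    constructor
    rintro (a | a) h <;> simp_all

open Finset Matrix

theorem Fin.sum_sum_ite_val_add_one_eq {M : Type*} [AddCommMonoid M] {n : ℕ}
    (g : Fin (n + 1) → Fin (n + 1) → M) :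
    ∑ i, ∑ j, (if i.1 + 1 = j.1 then g i j else 0) = ∑ i : Fin n, g i.castSucc i.succ := by
  have hsucc (i : Fin n) (j : Fin (n + 1)) : i.castSucc.1 + 1 = j.1 ↔ i.succ = j := by
    simp [Fin.ext_iff]
  have hlast (j : Fin (n + 1)) : ¬(Fin.last n).1 + 1 = j.1 := by rw [Fin.val_last]; omega
  rw [Fin.sum_univ_castSucc, sum_eq_zero fun j _ ↦ if_neg (hlast j), add_zero]
  refine sum_congr rfl fun i _ ↦ ?_
  rw [sum_congr rfl fun j _ ↦ if_congr (hsucc i j) rfl rfl, sum_ite_eq, if_pos (mem_univ _)]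

theorem Fin.sum_sum_ite_adjacent {M : Type*} [AddCommMonoid M] {n : ℕ}
    (g : Fin (n + 1) → Fin (n + 1) → M) (hg : ∀ i j, g i j = g j i) :
    ∑ i, ∑ j, (if i.1 + 1 = j.1 ∨ j.1 + 1 = i.1 then g i j else 0)
      = 2 • ∑ i : Fin n, g i.castSucc i.succ := by
  have hsplit (i j : Fin (n + 1)) : (if i.1 + 1 = j.1 ∨ j.1 + 1 = i.1 then g i j else 0)
      = (if i.1 + 1 = j.1 then g i j else 0) + (if j.1 + 1 = i.1 then g j i else 0) := by
    by_cases h : i.1 + 1 = j.1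
    · simp [h, show ¬j.1 + 1 = i.1 by omega]
    · by_cases h' : j.1 + 1 = i.1 <;> simp [h, h', hg i j]
  simp only [hsplit, sum_add_distrib]
  rw [sum_comm (f := fun i j ↦ if j.1 + 1 = i.1 then g j i else 0),
    Fin.sum_sum_ite_val_add_one_eq, two_nsmul]

theorem exists_sum_eq_zero_sum_sq_eq_one {V : Type*} [Fintype V] [DecidableEq V] [Nontrivial V] :
    ∃ x : V → ℝ, ∑ v, x v = 0 ∧ ∑ v, x v ^ 2 = 1 := by
  obtain ⟨a, b, hab⟩ := exists_pair_ne V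
  set s : ℝ := (√2)⁻¹
  refine ⟨Pi.single a s - Pi.single b s, by simp, ?_⟩
  have hsq : ∀ v, (Pi.single a s - Pi.single b s : V → ℝ) v ^ 2
      = (Pi.single a (s ^ 2) : V → ℝ) v + (Pi.single b (s ^ 2) : V → ℝ) v := by
    intro v
    rcases eq_or_ne v a with rfl | hva
    · simp [hab]
    · rcases eq_or_ne v b with rfl | hvb <;> simp [*]
  simp only [hsq, sum_add_distrib, sum_pi_single', mem_univ, if_true]
  norm_num [s]

namespace SimpleGraph

variable {V : Type*} [Fintype V] [DecidableEq V] (G : SimpleGraph V) [inst : DecidableRel G.Adj]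

theorem dotProduct_lapMatrix_mulVec_nonneg (x : V → ℝ) : 0 ≤ x ⬝ᵥ (G.lapMatrix ℝ *ᵥ x) := by
  simpa using (G.posSemidef_lapMatrix ℝ).dotProduct_mulVec_nonneg x

theorem dotProduct_lapMatrix_mulVec_comm (x y : V → ℝ) :
    x ⬝ᵥ (G.lapMatrix ℝ *ᵥ y) = y ⬝ᵥ (G.lapMatrix ℝ *ᵥ x) := by
  rw [dotProduct_mulVec, ← mulVec_transpose, (G.isSymm_lapMatrix ℝ).eq, dotProduct_comm]

theorem sum_lapMatrix_mulVec (x : V → ℝ) : ∑ v, (G.lapMatrix ℝ *ᵥ x) v = 0 := by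
  have h := G.dotProduct_lapMatrix_mulVec_comm (fun _ ↦ 1) x
  rw [lapMatrix_mulVec_const_eq_zero, dotProduct_zero] at h
  simpa [dotProduct] using h

theorem algConn_le_dotProduct_lapMatrix_mulVec {x : V → ℝ} (h0 : ∑ v, x v = 0)
    (h1 : ∑ v, x v ^ 2 = 1) : algConn G ≤ x ⬝ᵥ (G.lapMatrix ℝ *ᵥ x) := by
  obtain rfl : inst = Classical.decRel G.Adj := Subsingleton.elim _ _
  classical
  refine csInf_le ⟨0, ?_⟩ ⟨x, h0, h1, rfl⟩
  rintro r ⟨y, -, -, rfl⟩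
  exact G.dotProduct_lapMatrix_mulVec_nonneg y

theorem algConn_mul_sum_sq_le {x : V → ℝ} (h0 : ∑ v, x v = 0) :
    algConn G * ∑ v, x v ^ 2 ≤ x ⬝ᵥ (G.lapMatrix ℝ *ᵥ x) := by
  obtain hm | hm := (sum_nonneg fun v _ ↦ sq_nonneg (x v) : 0 ≤ ∑ v, x v ^ 2).eq_or_lt
  · rw [← hm, mul_zero]
    exact G.dotProduct_lapMatrix_mulVec_nonneg x
  set m := ∑ v, x v ^ 2
  set s := (√m)⁻¹
  have hs : s ^ 2 * m = 1 := by
    rw [inv_pow, Real.sq_sqrt hm.le, inv_mul_cancel₀ hm.ne']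
  have h := G.algConn_le_dotProduct_lapMatrix_mulVec (x := s • x)
    (by simp [← mul_sum, h0]) (by simpa [mul_pow, ← mul_sum] using hs)
  rw [mulVec_smul, dotProduct_smul, smul_dotProduct, smul_smul, smul_eq_mul, ← sq] at h
  have := mul_le_mul_of_nonneg_right h hm.le
  rwa [mul_right_comm, hs, one_mul] at this

theorem exists_dotProduct_lapMatrix_mulVec_eq_algConn [Nontrivial V] :
    ∃ x : V → ℝ, ∑ v, x v = 0 ∧ ∑ v, x v ^ 2 = 1 ∧ x ⬝ᵥ (G.lapMatrix ℝ *ᵥ x) = algConn G := by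
  obtain rfl : inst = Classical.decRel G.Adj := Subsingleton.elim _ _
  classical
  set K : Set (V → ℝ) := {x | ∑ v, x v = 0 ∧ ∑ v, x v ^ 2 = 1}
  have hK : IsCompact K := by
    refine (isCompact_closedBall (0 : V → ℝ) 1).of_isClosed_subset ?_ fun x hx ↦ ?_
    · exact (isClosed_eq (by fun_prop) continuous_const).inter
        (isClosed_eq (by fun_prop) continuous_const)
    · rw [mem_closedBall_zero_iff, pi_norm_le_iff_of_nonneg zero_le_one]
      intro v
      rw [Real.norm_eq_abs, ← sq_le_one_iff_abs_le_one, ← hx.2]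
      exact single_le_sum (f := fun v ↦ x v ^ 2) (fun v _ ↦ sq_nonneg _) (mem_univ v)
  obtain ⟨x₀, hx₀⟩ := exists_sum_eq_zero_sum_sq_eq_one (V := V)
  obtain ⟨x, ⟨h0, h1⟩, hx⟩ := (hK.image (f := fun x ↦ x ⬝ᵥ (G.lapMatrix ℝ *ᵥ x))
    (by fun_prop)).sInf_mem ⟨_, x₀, hx₀, rfl⟩
  refine ⟨x, h0, h1, hx.trans (congrArg sInf ?_)⟩
  ext r
  exact ⟨fun ⟨y, hy, hr⟩ ↦ ⟨y, hy.1, hy.2, hr.symm⟩, fun ⟨y, h0, h1, hr⟩ ↦ ⟨y, ⟨h0, h1⟩, hr.symm⟩⟩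

theorem lapMatrix_mulVec_eq_algConn_smul {x : V → ℝ} (h0 : ∑ v, x v = 0)
    (h1 : ∑ v, x v ^ 2 = 1) (hx : x ⬝ᵥ (G.lapMatrix ℝ *ᵥ x) = algConn G) :
    G.lapMatrix ℝ *ᵥ x = algConn G • x := by
  set r := G.lapMatrix ℝ *ᵥ x - algConn G • x
  have sum_sq_eq (y : V → ℝ) : ∑ v, y v ^ 2 = y ⬝ᵥ y := by simp [dotProduct, sq]
  have hr : ∀ z : V → ℝ, ∑ v, z v = 0 → z ⬝ᵥ r = 0 := by
    intro z hz
    -- `t ↦ q(x + t z)`, with `q(y) = y ⬝ L y - α y ⬝ y`, is a nonnegative quadratic vanishing at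
    -- `t = 0`, so its linear coefficient vanishes.
    have hq (t : ℝ) : 0 ≤ (z ⬝ᵥ (G.lapMatrix ℝ *ᵥ z) - algConn G * (z ⬝ᵥ z)) * (t * t)
        + 2 * (z ⬝ᵥ r) * t + 0 := by
      have h := G.algConn_mul_sum_sq_le (x := x + t • z)
        (by simp [sum_add_distrib, h0, ← mul_sum, hz])
      rw [sum_sq_eq] at h h1
      simp only [mulVec_add, mulVec_smul, add_dotProduct, dotProduct_add, smul_dotProduct,
        dotProduct_smul, smul_eq_mul, G.dotProduct_lapMatrix_mulVec_comm x z, dotProduct_comm x z,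
        hx, h1] at h
      simp only [r, dotProduct_sub, dotProduct_smul, smul_eq_mul]
      nlinarith
    have := discrim_le_zero hq
    rw [discrim] at this
    nlinarith [sq_nonneg (z ⬝ᵥ r)]
  have hsum : ∑ v, r v = 0 := by
    simp [r, sum_sub_distrib, G.sum_lapMatrix_mulVec, ← mul_sum, h0]
  exact sub_eq_zero.1 (dotProduct_self_eq_zero.1 (hr r hsum))

theorem one_sub_mul_apply_eq_of_neighborFinset_eq {x : V → ℝ} {μ : ℝ} {v u : V}
    (hx : G.lapMatrix ℝ *ᵥ x = μ • x) (hv : G.neighborFinset v = {u}) :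
    (1 - μ) * x v = x u := by
  have h := congrFun hx v
  simp only [lapMatrix_mulVec_apply, ← card_neighborFinset_eq_degree, hv, card_singleton,
    sum_singleton, Pi.smul_apply, smul_eq_mul, Nat.cast_one] at h
  linarith

theorem apply_eq_zero_of_lapMatrix_mulVec_apply_eq_zero {x : V → ℝ} {v u : V}
    (hLx : (G.lapMatrix ℝ *ᵥ x) v = 0) (hv : x v = 0) (huv : G.Adj v u)
    (hN : ∀ w, G.Adj v w → w ≠ u → x w = 0) : x u = 0 := by
  rw [lapMatrix_mulVec_apply, hv, mul_zero, zero_sub, neg_eq_zero,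
    sum_eq_single_of_mem u ((G.mem_neighborFinset v u).2 huv)
      fun w hw hwu ↦ hN w ((G.mem_neighborFinset v w).1 hw) hwu] at hLx
  exact hLx

end SimpleGraph

namespace Tkld

open Sum

variable {k l d : ℕ}

@[simp] theorem adj_inl_inl (a b : Fin k) : ¬(Tkld k l d).Adj (inl a) (inl b) := id
@[simp] theorem adj_inl_inr_inr (a : Fin k) (b : Fin l) :
    ¬(Tkld k l d).Adj (inl a) (inr (inr b)) := id
@[simp] theorem adj_inr_inr_inl (a : Fin l) (b : Fin k) :
    ¬(Tkld k l d).Adj (inr (inr a)) (inl b) := id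
@[simp] theorem adj_inr_inr_inr_inr (a b : Fin l) :
    ¬(Tkld k l d).Adj (inr (inr a)) (inr (inr b)) := id
@[simp] theorem adj_inr_inl_inr_inl (i j : Fin d) :
    (Tkld k l d).Adj (inr (inl i)) (inr (inl j)) ↔ i.1 + 1 = j.1 ∨ j.1 + 1 = i.1 := Iff.rfl
@[simp] theorem adj_inl_inr_inl (a : Fin k) (j : Fin (d + 1)) :
    (Tkld k l (d + 1)).Adj (inl a) (inr (inl j)) ↔ j = 0 := Fin.val_eq_zero_iff
@[simp] theorem adj_inr_inl_inl (a : Fin k) (j : Fin (d + 1)) :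
    (Tkld k l (d + 1)).Adj (inr (inl j)) (inl a) ↔ j = 0 := Fin.val_eq_zero_iff
@[simp] theorem adj_inr_inl_inr_inr (j : Fin (d + 1)) (b : Fin l) :
    (Tkld k l (d + 1)).Adj (inr (inl j)) (inr (inr b)) ↔ j = Fin.last d := by
  rw [Fin.ext_iff, Fin.val_last]
  exact Nat.add_right_cancel_iff
@[simp] theorem adj_inr_inr_inr_inl (b : Fin l) (j : Fin (d + 1)) :
    (Tkld k l (d + 1)).Adj (inr (inr b)) (inr (inl j)) ↔ j = Fin.last d := by
  rw [Fin.ext_iff, Fin.val_last]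
  exact Nat.add_right_cancel_iff

theorem dotProduct_lapMatrix_mulVec [DecidableRel (Tkld k l (d + 1)).Adj]
    (x : Fin k ⊕ Fin (d + 1) ⊕ Fin l → ℝ) :
    x ⬝ᵥ ((Tkld k l (d + 1)).lapMatrix ℝ *ᵥ x) =
      ∑ a, (x (inl a) - x (inr (inl 0))) ^ 2
      + ∑ i : Fin d, (x (inr (inl i.castSucc)) - x (inr (inl i.succ))) ^ 2
      + ∑ b, (x (inr (inl (Fin.last d))) - x (inr (inr b))) ^ 2 := by
  rw [← toLinearMap₂'_apply', SimpleGraph.lapMatrix_toLinearMap₂']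
  simp only [Fintype.sum_sum_type, adj_inl_inl, adj_inl_inr_inr, adj_inr_inr_inl,
    adj_inr_inr_inr_inr, adj_inl_inr_inl, adj_inr_inl_inl, adj_inr_inl_inr_inl,
    adj_inr_inl_inr_inr, adj_inr_inr_inr_inl, if_false, sum_const_zero, sum_ite_irrel,
    sum_ite_eq', mem_univ, if_true, sum_add_distrib, zero_add, add_zero]
  rw [Fin.sum_sum_ite_adjacent _ fun i j ↦ sub_sq_comm _ _, nsmul_eq_mul,
    sum_congr rfl fun a _ ↦ sub_sq_comm (x (inr (inl 0))) (x (inl a)),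
    sum_congr rfl fun b _ ↦ sub_sq_comm (x (inr (inr b))) (x (inr (inl (Fin.last d))))]
  ring

theorem neighborFinset_inl [DecidableRel (Tkld k l (d + 1)).Adj] (a : Fin k) :
    (Tkld k l (d + 1)).neighborFinset (inl a) = {inr (inl 0)} := by
  ext (b | j | b) <;> simp

theorem neighborFinset_inr_inr [DecidableRel (Tkld k l (d + 1)).Adj] (b : Fin l) :
    (Tkld k l (d + 1)).neighborFinset (inr (inr b)) = {inr (inl (Fin.last d))} := by
  ext (a | j | a) <;> simp

theorem eq_zero_of_lapMatrix_mulVec_eq_smul [DecidableRel (Tkld k l (d + 1)).Adj]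
    {x : Fin k ⊕ Fin (d + 1) ⊕ Fin l → ℝ} {μ : ℝ} (hμ : μ ≠ 1)
    (hx : (Tkld k l (d + 1)).lapMatrix ℝ *ᵥ x = μ • x)
    (hlast : x (inr (inl (Fin.last d))) = 0) : x = 0 := by
  have hLx (v) : ((Tkld k l (d + 1)).lapMatrix ℝ *ᵥ x) v = μ * x v := by rw [hx]; rfl
  have hleaf {v u} (hN : (Tkld k l (d + 1)).neighborFinset v = {u}) (hu : x u = 0) :
      x v = 0 := by
    have h := (Tkld k l (d + 1)).one_sub_mul_apply_eq_of_neighborFinset_eq hx hN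
    rw [hu] at h
    exact (mul_eq_zero.1 h).resolve_left (sub_ne_zero.2 hμ.symm)
  have hright (b : Fin l) : x (inr (inr b)) = 0 := hleaf (neighborFinset_inr_inr b) hlast
  have hpath (m : ℕ) : ∀ i : Fin (d + 1), d ≤ i.1 + m → x (inr (inl i)) = 0 := by
    induction m with
    | zero =>
      intro i hi
      rwa [show i = Fin.last d from Fin.ext (by rw [Fin.val_last]; omega)]
    | succ m ih =>
      intro i hi
      by_cases him : d ≤ i.1 + m
      · exact ih i him
      set i' : Fin (d + 1) := ⟨i.1 + 1, by omega⟩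
      refine (Tkld k l (d + 1)).apply_eq_zero_of_lapMatrix_mulVec_apply_eq_zero
        (v := inr (inl i')) ?_ (ih i' (show d ≤ i.1 + 1 + m by omega)) (by simp [i']) ?_
      · rw [hLx, ih i' (show d ≤ i.1 + 1 + m by omega), mul_zero]
      · rintro (a | j | b) hadj hne
        · simp only [adj_inr_inl_inl, Fin.ext_iff, Fin.val_zero, i'] at hadj
          omega
        · simp only [adj_inr_inl_inr_inl, ne_eq, inr.injEq, inl.injEq, Fin.ext_iff, i']
            at hadj hne
          exact ih j (by omega)
        · exact hright b
  ext (a | i | b)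
  · exact hleaf (neighborFinset_inl a) (hpath d 0 (by simp))
  · exact hpath d i (by omega)
  · exact hright b

theorem apply_inr_inl_last_ne [DecidableRel (Tkld k (l + 1) (d + 1)).Adj]
    {x : Fin k ⊕ Fin (d + 1) ⊕ Fin (l + 1) → ℝ} {μ c : ℝ} (hμ : μ ≠ 1)
    (hx : (Tkld k (l + 1) (d + 1)).lapMatrix ℝ *ᵥ x = μ • x) (hx0 : x ≠ 0)
    (hsum : ∑ v, x v = 0) (hc : ∀ b, x (inr (inr b)) = c) :
    x (inr (inl (Fin.last d))) ≠ c := by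
  intro hlast
  have hμc : μ * c = 0 := by
    have h := (Tkld k (l + 1) (d + 1)).one_sub_mul_apply_eq_of_neighborFinset_eq hx
      (neighborFinset_inr_inr 0)
    rw [hc, hlast] at h
    linarith
  have hL0 : (Tkld k (l + 1) (d + 1)).lapMatrix ℝ *ᵥ (fun _ ↦ c) = 0 := by
    rw [show (fun _ ↦ c) = c • fun _ ↦ (1 : ℝ) by ext; simp, mulVec_smul,
      SimpleGraph.lapMatrix_mulVec_const_eq_zero, smul_zero]
  have hconst : x = fun _ ↦ c := by
    refine sub_eq_zero.1 (eq_zero_of_lapMatrix_mulVec_eq_smul hμ ?_ (by simp [hlast]))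
    ext v
    simp only [mulVec_sub, hx, hL0, Pi.sub_apply, Pi.smul_apply, smul_eq_mul, Pi.zero_apply]
    linear_combination hμc
  subst hconst
  have hc0 : c = 0 := by
    simp only [sum_const, card_univ, Fintype.card_sum, Fintype.card_fin, nsmul_eq_mul] at hsum
    exact (mul_eq_zero.1 hsum).resolve_left (by positivity)
  exact hx0 (funext fun _ ↦ hc0)

theorem algConn_lt_one (hk : 0 < k) (hl : 0 < l) : algConn (Tkld k l (d + 2)) < 1 := by
  classical
  set z : Fin k ⊕ Fin (d + 2) ⊕ Fin l → ℝ :=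
    Sum.elim (fun _ ↦ l) (Sum.elim (fun i ↦ if i = 0 then l else 0) (fun _ ↦ -(k + 1)))
  have hsum : ∑ v, z v = 0 := by
    simp only [Fintype.sum_sum_type, elim_inl, elim_inr, sum_const, card_univ, Fintype.card_fin,
      nsmul_eq_mul, sum_ite_eq', mem_univ, if_true, z]
    ring
  have hsq : ∑ v, z v ^ 2 = k * l ^ 2 + l ^ 2 + l * (k + 1) ^ 2 := by
    simp only [Fintype.sum_sum_type, elim_inl, elim_inr, sum_const, card_univ, Fintype.card_fin,
      nsmul_eq_mul, ite_pow, zero_pow two_ne_zero, sum_ite_eq', mem_univ, if_true, z]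
    ring
  have hQ : z ⬝ᵥ ((Tkld k l (d + 2)).lapMatrix ℝ *ᵥ z) = l ^ 2 + l * (k + 1) ^ 2 := by
    rw [dotProduct_lapMatrix_mulVec]
    simp [z, Fin.castSucc_eq_zero_iff, Fin.succ_ne_zero]
  have h := (Tkld k l (d + 2)).algConn_mul_sum_sq_le hsum
  rw [hsq, hQ] at h
  have hkl : (0 : ℝ) < k * l ^ 2 := by positivity
  refine lt_of_mul_lt_mul_right (h.trans_lt ?_)
    (by positivity : (0 : ℝ) ≤ k * l ^ 2 + l ^ 2 + l * (k + 1) ^ 2)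
  linarith

/-- `x` read along the bijection from `T(k,l,d+2)` to `T(k,l+1,d+1)` that sends the new last
path vertex to the last right pendant. -/
def extendPath (x : Fin k ⊕ Fin (d + 1) ⊕ Fin (l + 1) → ℝ) : Fin k ⊕ Fin (d + 2) ⊕ Fin l → ℝ :=
  Sum.elim (fun a ↦ x (inl a))
    (Sum.elim (Fin.snoc (fun i ↦ x (inr (inl i))) (x (inr (inr (Fin.last l)))))
      (fun b ↦ x (inr (inr b.castSucc))))

theorem sum_extendPath (g : ℝ → ℝ) (x : Fin k ⊕ Fin (d + 1) ⊕ Fin (l + 1) → ℝ) :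
    ∑ v, g (extendPath x v) = ∑ v, g (x v) := by
  simp only [extendPath, Fintype.sum_sum_type, elim_inl, elim_inr,
    Fin.sum_univ_castSucc (n := d + 1), Fin.snoc_castSucc, Fin.snoc_last,
    Fin.sum_univ_castSucc (n := l)]
  ring

theorem dotProduct_lapMatrix_mulVec_extendPath [DecidableRel (Tkld k l (d + 2)).Adj]
    [DecidableRel (Tkld k (l + 1) (d + 1)).Adj] {x : Fin k ⊕ Fin (d + 1) ⊕ Fin (l + 1) → ℝ}
    {c : ℝ} (hc : ∀ b, x (inr (inr b)) = c) :
    extendPath x ⬝ᵥ ((Tkld k l (d + 2)).lapMatrix ℝ *ᵥ extendPath x) =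
      x ⬝ᵥ ((Tkld k (l + 1) (d + 1)).lapMatrix ℝ *ᵥ x)
        - l * (x (inr (inl (Fin.last d))) - c) ^ 2 := by
  rw [dotProduct_lapMatrix_mulVec, dotProduct_lapMatrix_mulVec]
  simp only [extendPath, hc, elim_inl, elim_inr, Fin.snoc_apply_zero, Fin.snoc_castSucc,
    Fin.sum_univ_castSucc (n := d), Fin.succ_last, Fin.snoc_last, Fin.sum_univ_castSucc (n := l),
    sub_self, zero_pow two_ne_zero, sum_const_zero, add_zero, sum_const, card_univ,
    Fintype.card_fin, nsmul_eq_mul, Fin.succ_castSucc]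
  ring

end Tkld

/-- for `k ≥ 1`, `l ≥ 2`, `d ≥ 1`, `α(T(k,l,d)) > α(T(k,l−1,d+1))`. -/
theorem algConn_Tkld_gt_right (k l d : ℕ) (hk : 1 ≤ k) (hl : 2 ≤ l) (hd : 1 ≤ d) :
    algConn (Tkld k l d) > algConn (Tkld k (l - 1) (d + 1)) := by
  obtain ⟨d, rfl⟩ : ∃ d', d = d' + 1 := ⟨d - 1, by omega⟩
  obtain ⟨l, rfl⟩ : ∃ l', l = l' + 1 := ⟨l - 1, by omega⟩
  rw [Nat.add_sub_cancel]
  classical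
  set μ := algConn (Tkld k (l + 1) (d + 1))
  obtain hμ | hμ := eq_or_ne μ 1
  · exact hμ ▸ Tkld.algConn_lt_one hk (by omega)
  have : Nontrivial (Fin k ⊕ Fin (d + 1) ⊕ Fin (l + 1)) :=
    ⟨Sum.inl ⟨0, hk⟩, Sum.inr (Sum.inl 0), by simp⟩
  obtain ⟨x, h0, h1, hx⟩ := (Tkld k (l + 1) (d + 1)).exists_dotProduct_lapMatrix_mulVec_eq_algConn
  have heig := (Tkld k (l + 1) (d + 1)).lapMatrix_mulVec_eq_algConn_smul h0 h1 hx
  set c := x (Sum.inr (Sum.inl (Fin.last d))) / (1 - μ)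
  have hc (b) : x (Sum.inr (Sum.inr b)) = c := by
    rw [eq_div_iff (sub_ne_zero.2 hμ.symm), mul_comm]
    exact (Tkld k (l + 1) (d + 1)).one_sub_mul_apply_eq_of_neighborFinset_eq heig
      (Tkld.neighborFinset_inr_inr b)
  have hgap := Tkld.apply_inr_inl_last_ne hμ heig (by rintro rfl; simp at h1) h0 hc
  calc algConn (Tkld k l (d + 2))
      ≤ Tkld.extendPath x ⬝ᵥ ((Tkld k l (d + 2)).lapMatrix ℝ *ᵥ Tkld.extendPath x) :=
        (Tkld k l (d + 2)).algConn_le_dotProduct_lapMatrix_mulVec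
          ((Tkld.sum_extendPath id x).trans h0) ((Tkld.sum_extendPath (· ^ 2) x).trans h1)
    _ = μ - l * (x (Sum.inr (Sum.inl (Fin.last d))) - c) ^ 2 := by
        rw [Tkld.dotProduct_lapMatrix_mulVec_extendPath hc, hx]
    _ < μ := sub_lt_self μ (by positivity [sub_ne_zero.2 hgap, (by omega : 0 < l)])
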